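/- If (R, m) is a local ring, I is an ideal of R, and v ∈ Um_n(R, I) is a unimodular row congruent to e_1 = (1,0,…,0) modulo I, then v = e_1·β for some β ∈ E_n(R, I). -/

import Mathlib

/-!
Over a local ring some entry of a unimodular row is a unit. If the first entry `v₀` is not one,
then `v₀ - 1 ∈ I` is a unit, so `I = R` and a single transvection makes `v₀ = 1`. Transvections
with parameters in `I` then clear the other entries, leaving `u e₀` with `u` a unit and
`u ≡ 1 (mod I)`. Finally `u e₀ ↦ e₀` is achieved by
`E₁₀(1) E₀₁((u - 1) u⁻¹) E₁₀(-1) E₀₁(1 - u)`: the first factor fixes `u e₀`, and the first three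
factors form a conjugate of an element of `E_n(I)`.
-/

open Matrix

variable (n : ℕ) (R : Type*) [CommRing R]

/-- The elementary linear group E_n(R) ⊆ GL_n(R), generated by the elementary
matrices E_{ij}(x) = I + x e_{ij}, i ≠ j. -/
def elemGroup : Subgroup (GL (Fin n) R) :=
  Subgroup.closure {g | ∃ i j : Fin n, ∃ x : R, i ≠ j ∧
    (g : Matrix (Fin n) (Fin n) R) = Matrix.transvection i j x}

/-- The group E_n(I), generated by elementary matrices with parameter in the ideal I. -/
def elemGroupI (I : Ideal R) : Subgroup (GL (Fin n) R) :=
  Subgroup.closure {g | ∃ i j : Fin n, ∃ x : R, i ≠ j ∧ x ∈ I ∧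
    (g : Matrix (Fin n) (Fin n) R) = Matrix.transvection i j x}

/-- The relative elementary group E_n(R, I): the normal closure of E_n(I) in E_n(R). -/
def elemGroupRel (I : Ideal R) : Subgroup (GL (Fin n) R) :=
  Subgroup.closure {g | ∃ e ∈ elemGroup n R, ∃ h ∈ elemGroupI n R I, g = e * h * e⁻¹}

variable {n R}

def transvectionGL {i j : Fin n} (hij : i ≠ j) (c : R) : GL (Fin n) R :=
  SpecialLinearGroup.toGL (SpecialLinearGroup.transvection hij c)

section transvectionGL

variable {i j : Fin n} (hij : i ≠ j)

@[simp]
theorem coe_transvectionGL (c : R) :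
    (transvectionGL hij c : Matrix (Fin n) (Fin n) R) = transvection i j c :=
  rfl

theorem transvectionGL_inv (c : R) : (transvectionGL hij c)⁻¹ = transvectionGL hij (-c) := by
  rw [transvectionGL, ← map_inv, SpecialLinearGroup.transvection_inv, transvectionGL]

theorem transvectionGL_mem_elemGroup (c : R) : transvectionGL hij c ∈ elemGroup n R :=
  Subgroup.subset_closure ⟨i, j, c, hij, rfl⟩

theorem transvectionGL_mem_elemGroupI {I : Ideal R} {c : R} (hc : c ∈ I) :
    transvectionGL hij c ∈ elemGroupI n R I :=
  Subgroup.subset_closure ⟨i, j, c, hij, hc, rfl⟩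

theorem vecMul_transvectionGL (v : Fin n → R) (c : R) :
    v ᵥ* (transvectionGL hij c : Matrix (Fin n) (Fin n) R) =
      Function.update v j (v j + v i * c) := by
  ext k
  rw [coe_transvectionGL, transvection, vecMul_add, vecMul_one, Pi.add_apply]
  rcases eq_or_ne k j with rfl | hk
  · simp [vecMul, dotProduct, single_apply]
  · simp [vecMul, dotProduct, hk, hk.symm]

end transvectionGL

theorem elemGroupI_le_elemGroupRel (I : Ideal R) : elemGroupI n R I ≤ elemGroupRel n R I :=
  fun g hg ↦ Subgroup.subset_closure ⟨1, one_mem _, g, hg, by group⟩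

theorem conj_mem_elemGroupRel {I : Ideal R} {e h : GL (Fin n) R} (he : e ∈ elemGroup n R)
    (hh : h ∈ elemGroupI n R I) : e * h * e⁻¹ ∈ elemGroupRel n R I :=
  Subgroup.subset_closure ⟨e, he, h, hh, rfl⟩

theorem exists_elemGroupI_vecMul_eq_single_of_support {I : Ideal R} {i : Fin n}
    (s : Finset (Fin n)) (hi : i ∉ s) (v : Fin n → R) (hvi : IsUnit (v i))
    (hI : ∀ j ∈ s, v j ∈ I) (hzero : ∀ j, j ≠ i → j ∉ s → v j = 0) :
    ∃ ε ∈ elemGroupI n R I, v ᵥ* (ε : Matrix (Fin n) (Fin n) R) = Pi.single i (v i) := by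
  classical
  induction s using Finset.induction_on generalizing v with
  | empty =>
    refine ⟨1, one_mem _, ?_⟩
    ext j
    rcases eq_or_ne j i with rfl | hj
    · simp
    · simp [hzero j hj (Finset.notMem_empty j), hj]
  | @insert j s hjs ih =>
    have hij : i ≠ j := fun h ↦ hi (h ▸ Finset.mem_insert_self i s)
    set c := -(v j * ↑hvi.unit⁻¹)
    have hv' : v ᵥ* (transvectionGL hij c : Matrix (Fin n) (Fin n) R) =
        Function.update v j 0 := by
      rw [vecMul_transvectionGL,
        show v j + v i * c = 0 by linear_combination (-v j) * hvi.mul_val_inv]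
    have hv'i : Function.update v j 0 i = v i := Function.update_of_ne hij _ _
    obtain ⟨ε, hε, hv'ε⟩ := ih (fun h ↦ hi (Finset.mem_insert_of_mem h)) _ (hv'i ▸ hvi)
      (fun k hk ↦ by
        rw [Function.update_of_ne (ne_of_mem_of_not_mem hk hjs)]
        exact hI k (Finset.mem_insert_of_mem hk))
      (fun k hki hks ↦ by
        rcases eq_or_ne k j with rfl | hkj
        · exact Function.update_self ..
        · rw [Function.update_of_ne hkj]
          exact hzero k hki (by simp [hkj, hks]))
    refine ⟨transvectionGL hij c * ε, mul_mem (transvectionGL_mem_elemGroupI hij ?_) hε, ?_⟩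
    · exact I.neg_mem (I.mul_mem_right _ (hI j (Finset.mem_insert_self j s)))
    · rw [Units.val_mul, ← vecMul_vecMul, hv', hv'ε, hv'i]

theorem exists_elemGroupI_vecMul_eq_single {I : Ideal R} {i : Fin n} {v : Fin n → R}
    (hvi : IsUnit (v i)) (hI : ∀ j, j ≠ i → v j ∈ I) :
    ∃ ε ∈ elemGroupI n R I, v ᵥ* (ε : Matrix (Fin n) (Fin n) R) = Pi.single i (v i) :=
  exists_elemGroupI_vecMul_eq_single_of_support _ (Finset.notMem_erase i _) v hvi
    (fun j hj ↦ hI j (Finset.ne_of_mem_erase hj))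
    (fun j hji hj ↦ absurd (Finset.mem_erase.2 ⟨hji, Finset.mem_univ j⟩) hj)

theorem exists_elemGroupRel_single_vecMul_eq_single_one {I : Ideal R} {i j : Fin n}
    (hij : i ≠ j) {u : R} (hu : IsUnit u) (hu1 : u - 1 ∈ I) :
    ∃ ε ∈ elemGroupRel n R I,
      Pi.single i u ᵥ* (ε : Matrix (Fin n) (Fin n) R) = Pi.single i 1 := by
  refine ⟨transvectionGL hij.symm 1 * transvectionGL hij ((u - 1) * ↑hu.unit⁻¹) *
    (transvectionGL hij.symm 1)⁻¹ * transvectionGL hij (-(u - 1)), ?_, ?_⟩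
  · exact mul_mem (conj_mem_elemGroupRel (transvectionGL_mem_elemGroup _ _)
      (transvectionGL_mem_elemGroupI _ (I.mul_mem_right _ hu1)))
      (elemGroupI_le_elemGroupRel I (transvectionGL_mem_elemGroupI _ (I.neg_mem hu1)))
  · have hx : u * ((u - 1) * ↑hu.unit⁻¹) = u - 1 := by
      rw [mul_left_comm, hu.mul_val_inv, mul_one]
    simp only [Units.val_mul, ← vecMul_vecMul, transvectionGL_inv, vecMul_transvectionGL]
    ext k
    rcases eq_or_ne k i with rfl | hki
    · simp [hij, hij.symm, hx]
    · rcases eq_or_ne k j with rfl | hkj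
      · simp [hij, hki, hx]
      · simp [hki, hkj, Function.update_apply]

theorem exists_elemGroupRel_vecMul_eq_single_one {I : Ideal R} {i j : Fin n} (hij : i ≠ j)
    {v : Fin n → R} (hvi : IsUnit (v i)) (hvi1 : v i - 1 ∈ I) (hI : ∀ k, k ≠ i → v k ∈ I) :
    ∃ ε ∈ elemGroupRel n R I, v ᵥ* (ε : Matrix (Fin n) (Fin n) R) = Pi.single i 1 := by
  obtain ⟨ε₁, hε₁, h₁⟩ := exists_elemGroupI_vecMul_eq_single hvi hI
  obtain ⟨ε₂, hε₂, h₂⟩ := exists_elemGroupRel_single_vecMul_eq_single_one hij hvi hvi1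
  exact ⟨ε₁ * ε₂, mul_mem (elemGroupI_le_elemGroupRel I hε₁) hε₂,
    by rw [Units.val_mul, ← vecMul_vecMul, h₁, h₂]⟩

theorem IsLocalRing.exists_isUnit_of_sum_mul_eq_one [IsLocalRing R] {ι : Type*}
    {s : Finset ι} {v w : ι → R} (h : ∑ i ∈ s, v i * w i = 1) : ∃ i ∈ s, IsUnit (v i) := by
  by_contra! hv
  have h1 : (1 : R) ∈ IsLocalRing.maximalIdeal R :=
    h ▸ Ideal.sum_mem _ fun i hi ↦ Ideal.mul_mem_right _ _ (hv i hi)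
  exact h1 isUnit_one

theorem exists_elemGroupI_isUnit_vecMul_apply [IsLocalRing R] {I : Ideal R} {i : Fin n}
    {v w : Fin n → R} (hw : ∑ k, v k * w k = 1) (hvi1 : v i - 1 ∈ I)
    (hI : ∀ k, k ≠ i → v k ∈ I) :
    ∃ ε ∈ elemGroupI n R I, IsUnit ((v ᵥ* (ε : Matrix (Fin n) (Fin n) R)) i) ∧
      (v ᵥ* (ε : Matrix (Fin n) (Fin n) R)) i - 1 ∈ I ∧
      ∀ k, k ≠ i → (v ᵥ* (ε : Matrix (Fin n) (Fin n) R)) k ∈ I := by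
  by_cases hvi : IsUnit (v i)
  · exact ⟨1, one_mem _, by simpa using hvi, by simpa using hvi1, by simpa using hI⟩
  obtain rfl : I = ⊤ := I.eq_top_of_isUnit_mem hvi1 <| by
    simpa using (IsLocalRing.isUnit_one_sub_self_of_mem_nonunits _ hvi).neg
  obtain ⟨k, -, hk⟩ := IsLocalRing.exists_isUnit_of_sum_mul_eq_one hw
  have hki : k ≠ i := by rintro rfl; exact hvi hk
  refine ⟨transvectionGL hki ((1 - v i) * ↑hk.unit⁻¹), transvectionGL_mem_elemGroupI _ trivial,
    ?_, trivial, fun _ _ ↦ trivial⟩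
  rw [vecMul_transvectionGL, Function.update_self,
    show v i + v k * ((1 - v i) * ↑hk.unit⁻¹) = 1 by
      linear_combination (1 - v i) * hk.mul_val_inv]
  exact isUnit_one

theorem unimodular_row_elementary_completion_local
    {R : Type*} [CommRing R] [IsLocalRing R] (I : Ideal R)
    (n : ℕ) (hn : 2 ≤ n) (v : Fin n → R)
    (hv : ∃ w : Fin n → R, ∑ i, v i * w i = 1)
    (hv0 : v ⟨0, by omega⟩ - 1 ∈ I)
    (hvi : ∀ i : Fin n, i ≠ ⟨0, by omega⟩ → v i ∈ I) :
    ∃ β ∈ elemGroupRel n R I,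
      v = (β : Matrix (Fin n) (Fin n) R) ⟨0, by omega⟩ := by
  obtain ⟨w, hw⟩ := hv
  obtain ⟨ε₀, hε₀, hunit, hε₀0, hε₀I⟩ := exists_elemGroupI_isUnit_vecMul_apply hw hv0 hvi
  obtain ⟨ε, hε, hrow⟩ := exists_elemGroupRel_vecMul_eq_single_one
    (j := ⟨1, by omega⟩) (by simp [Fin.ext_iff]) hunit hε₀0 hε₀I
  refine ⟨(ε₀ * ε)⁻¹, inv_mem (mul_mem (elemGroupI_le_elemGroupRel I hε₀) hε), ?_⟩
  refine Eq.trans ?_ (single_one_vecMul _ _)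
  rw [← hrow, vecMul_vecMul, vecMul_vecMul, ← Units.val_mul, ← Units.val_mul,
    ← mul_assoc, mul_inv_cancel, Units.val_one, vecMul_one]
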